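/- Let β = (βx, βy) ∈ (0,∞)², let (x⋆, y⋆) be a saddle point of L, and let z = (x,y) ∈ X × Y with f(x) < +∞. Then the outer-saddle smoothed gap satisfies G_β((x⋆, y); (x, y⋆)) ≥ −√(2 βx G_β(z)) · ‖x − x⋆‖. -/

import Mathlib

/-!
Let `φ u = L(u, y) + βx/2 ‖u - x‖²`, a `βx`-strongly convex function on `dom f`. Since
`A x⋆ = b`, the outer gap is `f(x⋆) - inf φ`, while the self-centered gap is at least
`φ(x) - inf φ`. For a `β`-strongly convex `φ` bounded below by `m`, comparing `φ` on the segment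
from `v` to `u` with `m` gives `t (φ u - m) + (1 - t) (φ v - m) ≥ β/2 · t (1 - t) ‖u - v‖²` for
`t ∈ [0, 1]`, and the choice `t = √(2 (φ v - m) / β) / ‖u - v‖` turns this into
`φ u - m ≥ β/2 ‖u - v‖² - ‖u - v‖ √(2 β (φ v - m))`. With `u = x⋆`, `v = x` and
`φ x⋆ = f(x⋆) + βx/2 ‖x - x⋆‖²` this is the claim.
-/

open scoped RealInnerProductSpace
open Filter Topology Metric

noncomputable section

variable {X Y : Type*} [NormedAddCommGroup X] [InnerProductSpace ℝ X]
  [NormedAddCommGroup Y] [InnerProductSpace ℝ Y]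

/-- The Lagrangian `L(x, y) = f(x) + ⟪A x − b, y⟫`. -/
def Lag (f : X → EReal) (A : X →L[ℝ] Y) (b : Y) (x : X) (y : Y) : EReal :=
  f x + ((⟪A x - b, y⟫ : ℝ) : EReal)

/-- The smoothed duality gap `G_β((x, y); (xd, yd))`, valued in `ℝ ∪ {+∞}` (here `EReal`;
the inner expression is `−∞` exactly when `f x' = +∞`, so such `x'` do not contribute). -/
def smoothedGap (f : X → EReal) (A : X →L[ℝ] Y) (b : Y) (βx βy : ℝ)
    (x : X) (y : Y) (xd : X) (yd : Y) : EReal :=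
  ⨆ w : X × Y,
    (Lag f A b x w.2 - Lag f A b w.1 y
      - ((βx / 2 * ‖w.1 - xd‖ ^ 2 + βy / 2 * ‖w.2 - yd‖ ^ 2 : ℝ) : EReal))

/-- `f` is proper: never `−∞` and not identically `+∞`. -/
def EProper (f : X → EReal) : Prop := (∀ u, f u ≠ ⊥) ∧ ∃ u, f u ≠ ⊤

/-- Convexity for an `EReal`-valued function. -/
def EConvexOn (f : X → EReal) : Prop :=
  ∀ u v : X, ∀ t : ℝ, 0 ≤ t → t ≤ 1 →
    f (t • u + (1 - t) • v) ≤ (t : EReal) * f u + ((1 - t : ℝ) : EReal) * f v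

/-- The subdifferential `∂f(x) = {q | ∀ u, f(u) ≥ f(x) + ⟪q, u − x⟫}`. -/
def ESubdiff (f : X → EReal) (x : X) : Set X :=
  {q | ∀ u : X, f x + ((⟪q, u - x⟫ : ℝ) : EReal) ≤ f u}

/-- `p = Prox_{s f}(v)`: `p` is the (unique) minimizer of `f(·) + (1/(2s))‖· − v‖²`. -/
def IsProx (f : X → EReal) (s : ℝ) (v p : X) : Prop :=
  ∀ u : X, f p + ((1 / (2 * s) * ‖p - v‖ ^ 2 : ℝ) : EReal)
    ≤ f u + ((1 / (2 * s) * ‖u - v‖ ^ 2 : ℝ) : EReal)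

/-- The Fenchel–Legendre conjugate `f*(φ) = sup_u (⟪φ, u⟫ − f(u))`. -/
def fenchel (f : X → EReal) (φ : X) : EReal := ⨆ u : X, (((⟪φ, u⟫ : ℝ) : EReal) - f u)

/-- The domain of the Fenchel conjugate. -/
def fdom (f : X → EReal) : Set X := {φ | fenchel f φ ≠ ⊤}

/-- `a = Proj_S(v)`: `a` is the (unique, for `S` closed convex nonempty) Euclidean
projection of `v` onto `S`. -/
def IsProj (S : Set X) (v a : X) : Prop := a ∈ S ∧ ∀ u ∈ S, ‖a - v‖ ≤ ‖u - v‖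

/-- `(xs, ys)` is a saddle point of the Lagrangian. -/
def IsSaddle (f : X → EReal) (A : X →L[ℝ] Y) (b : Y) (xs : X) (ys : Y) : Prop :=
  ∀ (x' : X) (y' : Y), Lag f A b xs y' ≤ Lag f A b xs ys ∧ Lag f A b xs ys ≤ Lag f A b x' ys

/-- The set of saddle points `Z⋆`. -/
def saddleSet (f : X → EReal) (A : X →L[ℝ] Y) (b : Y) : Set (X × Y) :=
  {zs | IsSaddle f A b zs.1 zs.2}

/-- Euclidean distance from a point of `X × Y` to a set. -/
def distZ (z : X × Y) (S : Set (X × Y)) : ℝ :=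
  ⨅ w : S, Real.sqrt (‖z.1 - (w : X × Y).1‖ ^ 2 + ‖z.2 - (w : X × Y).2‖ ^ 2)

/-- The projected duality gap `D(z)`, where `fx = f(x)` and `fa = f*(a)` (both finite). -/
def PDG (fx fa : ℝ) (A : X →L[ℝ] Y) (At : Y →L[ℝ] X) (b : Y) (a x : X) (y : Y) : ℝ :=
  |fx + fa + ⟪b, y⟫| ^ 2 + ‖a + At y‖ ^ 2 + ‖A x - b‖ ^ 2

theorem sub_two_sqrt_mul_le_of_forall_mem_Icc {p a c : ℝ} (hp : 0 ≤ p)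
    (h : ∀ t ∈ Set.Icc (0 : ℝ) 1, t * (1 - t) * p ≤ t * c + (1 - t) * a) :
    p - 2 * √(p * a) ≤ c := by
  have ha : 0 ≤ a := by simpa using h 0 (by simp)
  have hc : 0 ≤ c := by simpa using h 1 (by simp)
  obtain ⟨q, hq, rfl⟩ : ∃ q, 0 ≤ q ∧ p = q ^ 2 := ⟨√p, Real.sqrt_nonneg p, (Real.sq_sqrt hp).symm⟩
  obtain ⟨s, hs, rfl⟩ : ∃ s, 0 ≤ s ∧ a = s ^ 2 := ⟨√a, Real.sqrt_nonneg a, (Real.sq_sqrt ha).symm⟩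
  rw [← mul_pow, Real.sqrt_sq (mul_nonneg hq hs)]
  rcases le_or_gt q s with hqs | hsq
  · nlinarith
  rcases hs.eq_or_lt with rfl | hs
  · by_contra! hcq
    have hq : 0 < q ^ 2 := by positivity
    set t := (q ^ 2 - c) / (2 * q ^ 2) with ht
    have ht0 : 0 < t := div_pos (by linarith) (by positivity)
    have ht1 : t ≤ 1 := (div_le_one (by positivity)).2 (by linarith)
    have h1 : (1 - t) * q ^ 2 ≤ c := by
      have := h t ⟨ht0.le, ht1⟩
      nlinarith
    have h2 : (1 - t) * q ^ 2 = (q ^ 2 + c) / 2 := by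
      rw [ht]; field_simp; ring
    linarith
  · have := h (s / q) ⟨by positivity, (div_le_one (hs.trans hsq)).2 hsq.le⟩
    have hq : 0 < q := hs.trans hsq
    field_simp at this
    nlinarith

theorem StrongConvexOn.sq_norm_sub_le {E : Type*} [NormedAddCommGroup E] [NormedSpace ℝ E]
    {s : Set E} {β m : ℝ} {φ : E → ℝ} (hφ : StrongConvexOn s β φ) (hβ : 0 ≤ β)
    (hm : ∀ w ∈ s, m ≤ φ w) {u v : E} (hu : u ∈ s) (hv : v ∈ s) :
    β / 2 * ‖u - v‖ ^ 2 - ‖u - v‖ * √(2 * β * (φ v - m)) ≤ φ u - m := by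
  have key := sub_two_sqrt_mul_le_of_forall_mem_Icc (p := β / 2 * ‖u - v‖ ^ 2)
    (a := φ v - m) (c := φ u - m) (by positivity) fun t ⟨ht0, ht1⟩ => by
      have hconv := hφ.2 hu hv ht0 (sub_nonneg.2 ht1) (add_sub_cancel t 1)
      have hmin := hm _ (hφ.1 hu hv ht0 (sub_nonneg.2 ht1) (add_sub_cancel t 1))
      simp only [smul_eq_mul] at hconv
      linarith
  have hsqrt : 2 * √(β / 2 * ‖u - v‖ ^ 2 * (φ v - m)) = ‖u - v‖ * √(2 * β * (φ v - m)) := by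
    rw [show β / 2 * ‖u - v‖ ^ 2 * (φ v - m) = (‖u - v‖ / 2) ^ 2 * (2 * β * (φ v - m)) by ring,
      Real.sqrt_mul (sq_nonneg _), Real.sqrt_sq (by positivity)]
    ring
  linarith

theorem EConvexOn.convexOn_toReal {f : X → EReal} (hf : EConvexOn f) (hbot : ∀ u, f u ≠ ⊥) :
    ConvexOn ℝ {u | f u ≠ ⊤} fun u => (f u).toReal := by
  have key : ∀ u ∈ {u | f u ≠ ⊤}, ∀ v ∈ {u | f u ≠ ⊤}, ∀ a b : ℝ, 0 ≤ a → 0 ≤ b → a + b = 1 →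
      f (a • u + b • v) ≤ ((a * (f u).toReal + b * (f v).toReal : ℝ) : EReal) := by
    intro u hu v hv a b ha hb hab
    obtain rfl : b = 1 - a := by linarith
    have := hf u v a ha (by linarith)
    rwa [← EReal.coe_toReal hu (hbot u), ← EReal.coe_toReal hv (hbot v), ← EReal.coe_mul,
      ← EReal.coe_mul, ← EReal.coe_add] at this
  refine ⟨fun u hu v hv a b ha hb hab => ?_, fun u hu v hv a b ha hb hab => ?_⟩
  · exact ne_top_of_le_ne_top (EReal.coe_ne_top _) (key u hu v hv a b ha hb hab)
  · exact (EReal.toReal_le_toReal (key u hu v hv a b ha hb hab) (hbot _)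
      (EReal.coe_ne_top _)).trans_eq (EReal.toReal_coe _)

theorem strongConvexOn_inner_sub_add_sq_norm_sub (A : X →L[ℝ] Y) (b y : Y) (β : ℝ) (x : X)
    {s : Set X} (hs : Convex ℝ s) :
    StrongConvexOn s β fun u => ⟪A u - b, y⟫ + β / 2 * ‖u - x‖ ^ 2 := by
  refine ⟨hs, fun u _ v _ a c ha hc hac => le_of_eq ?_⟩
  obtain rfl : c = 1 - a := by linarith
  have h1 : a • u + (1 - a) • v - x = a • (u - x) + (1 - a) • (v - x) := by module
  have h2 : A (a • u + (1 - a) • v) - b = a • (A u - b) + (1 - a) • (A v - b) := by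
    rw [map_add, map_smul, map_smul]; module
  have h3 : u - v = (u - x) - (v - x) := by abel
  dsimp only
  rw [h1, h2, h3]
  generalize u - x = p, v - x = q
  simp only [← real_inner_self_eq_norm_sq, inner_add_left, inner_add_right, inner_sub_left,
    inner_sub_right, real_inner_smul_left, real_inner_smul_right, smul_eq_mul, real_inner_comm p q]
  ring

theorem coe_le_smoothedGap {f : X → EReal} (A : X →L[ℝ] Y) (b : Y) (βx βy : ℝ) {x u : X}
    {fx fu : ℝ} (hx : f x = fx) (hu : f u = fu) (y y' : Y) (xd : X) (yd : Y) :
    ((fx + ⟪A x - b, y'⟫ - (fu + ⟪A u - b, y⟫)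
      - (βx / 2 * ‖u - xd‖ ^ 2 + βy / 2 * ‖y' - yd‖ ^ 2) : ℝ) : EReal)
      ≤ smoothedGap f A b βx βy x y xd yd := by
  refine le_trans (le_of_eq ?_) (le_iSup _ (u, y'))
  simp only [Lag, hx, hu]
  norm_cast

/-- `L(u, y) + β/2 ‖u - x‖²` on `dom f`; outside it the value is junk, as
`(⊤ : EReal).toReal = 0`. -/
def proxLag (f : X → EReal) (A : X →L[ℝ] Y) (b : Y) (β : ℝ) (x : X) (y : Y) (u : X) : ℝ :=
  (f u).toReal + (⟪A u - b, y⟫ + β / 2 * ‖u - x‖ ^ 2)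

section proxLag

variable {f : X → EReal} (A : X →L[ℝ] Y) (b : Y) (β : ℝ) (x : X) (y : Y)

theorem strongConvexOn_proxLag (hf : EConvexOn f) (hbot : ∀ u, f u ≠ ⊥) :
    StrongConvexOn {u | f u ≠ ⊤} β (proxLag f A b β x y) := by
  have hconv := hf.convexOn_toReal hbot
  have := hconv.uniformConvexOn_zero.add
    (strongConvexOn_inner_sub_add_sq_norm_sub A b y β x hconv.1)
  rwa [zero_add] at this

variable (βy : ℝ)

theorem proxLag_sub_le_smoothedGap_self (hbot : ∀ u, f u ≠ ⊥) (hx : f x ≠ ⊤) (u : X)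
    (hu : f u ≠ ⊤) :
    ((proxLag f A b β x y x - proxLag f A b β x y u : ℝ) : EReal)
      ≤ smoothedGap f A b β βy x y x y := by
  convert coe_le_smoothedGap A b β βy (EReal.coe_toReal hx (hbot x)).symm
    (EReal.coe_toReal hu (hbot u)).symm y y x y using 2
  simp only [proxLag, sub_self, norm_zero]
  ring

theorem toReal_sub_proxLag_le_smoothedGap (hbot : ∀ u, f u ≠ ⊥) {xs : X} (hxs : f xs ≠ ⊤)
    (hAxs : A xs = b) (ys : Y) (u : X) (hu : f u ≠ ⊤) :
    (((f xs).toReal - proxLag f A b β x y u : ℝ) : EReal) ≤ smoothedGap f A b β βy xs y x ys := by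
  convert coe_le_smoothedGap A b β βy (EReal.coe_toReal hxs (hbot xs)).symm
    (EReal.coe_toReal hu (hbot u)).symm y ys x ys using 2
  simp only [proxLag, hAxs, sub_self, inner_zero_left, norm_zero]
  ring

end proxLag

namespace IsSaddle

variable {f : X → EReal} {A : X →L[ℝ] Y} {b : Y} {xs : X} {ys : Y}

theorem ne_top (h : IsSaddle f A b xs ys) {x : X} (hx : f x ≠ ⊤) : f xs ≠ ⊤ := by
  intro htop
  have := (h x ys).2
  rw [Lag, Lag, htop, EReal.top_add_coe, top_le_iff] at this
  exact EReal.add_ne_top hx (EReal.coe_ne_top _) this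

theorem map_eq (h : IsSaddle f A b xs ys) {F : ℝ} (hF : f xs = F) : A xs = b := by
  have := (h xs (ys + (A xs - b))).1
  simp only [Lag, hF, inner_add_right, real_inner_self_eq_norm_sq] at this
  norm_cast at this
  have hsq : ‖A xs - b‖ ^ 2 = 0 := le_antisymm (by linarith) (sq_nonneg _)
  simpa [sub_eq_zero] using hsq

end IsSaddle

theorem outer_saddle_smoothedGap_ge_neg_sqrt_general
    (f : X → EReal) (A : X →L[ℝ] Y) (b : Y)
    (hf_proper : EProper f) (hf_conv : EConvexOn f)
    (βx βy : ℝ) (hβx : 0 < βx)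
    (xs : X) (ys : Y) (hsaddle : IsSaddle f A b xs ys)
    (x : X) (y : Y) (hfx : f x < ⊤)
    (g : ℝ) (hg : smoothedGap f A b βx βy x y x y = (g : EReal)) :
    ((-(Real.sqrt (2 * βx * g) * ‖x - xs‖) : ℝ) : EReal)
      ≤ smoothedGap f A b βx βy xs y x ys := by
  obtain ⟨hbot, -⟩ := hf_proper
  have hxs : f xs ≠ ⊤ := hsaddle.ne_top hfx.ne
  have hAxs : A xs = b := hsaddle.map_eq (EReal.coe_toReal hxs (hbot xs)).symm
  have hout := toReal_sub_proxLag_le_smoothedGap A b βx x y βy hbot hxs hAxs ys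
  have hself := proxLag_sub_le_smoothedGap_self A b βx x y βy hbot hfx.ne
  have hconv := strongConvexOn_proxLag A b βx x y hf_conv hbot
  set φ := proxLag f A b βx x y
  simp only [hg, EReal.coe_le_coe_iff] at hself
  rcases eq_or_ne (smoothedGap f A b βx βy xs y x ys) ⊤ with htop | htop
  · rw [htop]; exact le_top
  obtain ⟨s, hs⟩ : ∃ s : ℝ, smoothedGap f A b βx βy xs y x ys = s :=
    ⟨_, (EReal.coe_toReal htop (ne_bot_of_le_ne_bot (EReal.coe_ne_bot _) (hout x hfx.ne))).symm⟩
  simp only [hs, EReal.coe_le_coe_iff] at hout ⊢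
  -- a lower bound of `φ` that is good enough in place of `⨅ u, φ u`
  set m := max (φ x - g) ((f xs).toReal - s)
  have hm : ∀ u ∈ {u | f u ≠ ⊤}, m ≤ φ u := fun u hu =>
    max_le (by linarith [hself u hu]) (by linarith [hout u hu])
  have key := hconv.sq_norm_sub_le hβx.le hm hxs hfx.ne
  have hφxs : φ xs = (f xs).toReal + βx / 2 * ‖x - xs‖ ^ 2 := by
    simp [φ, proxLag, hAxs, norm_sub_rev xs x]
  have hsqrt : ‖x - xs‖ * √(2 * βx * (φ x - m)) ≤ ‖x - xs‖ * √(2 * βx * g) := by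
    gcongr
    linarith [le_max_left (φ x - g) ((f xs).toReal - s)]
  rw [norm_sub_rev xs x, hφxs] at key
  linarith [le_max_right (φ x - g) ((f xs).toReal - s)]

/-- outer-saddle gap bounded below via the self-centered gap.
If `(x⋆, y⋆)` is a saddle point of `L` and `f(x) < +∞`, then
`G_β((x⋆, y); (x, y⋆)) ≥ −√(2 βx G_β(z)) ‖x − x⋆‖` (the value `g` of the
self-centered smoothed gap, finite under the standing assumptions, is given by `hg`). -/
theorem outer_saddle_smoothedGap_ge_neg_sqrt
    [FiniteDimensional ℝ X] [FiniteDimensional ℝ Y]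
    (f : X → EReal) (A : X →L[ℝ] Y) (b : Y)
    (hf_proper : EProper f) (hf_lsc : LowerSemicontinuous f) (hf_conv : EConvexOn f)
    (βx βy : ℝ) (hβx : 0 < βx) (hβy : 0 < βy)
    (xs : X) (ys : Y) (hsaddle : IsSaddle f A b xs ys)
    (x : X) (y : Y) (hfx : f x < ⊤)
    (g : ℝ) (hg : smoothedGap f A b βx βy x y x y = (g : EReal)) :
    ((-(Real.sqrt (2 * βx * g) * ‖x - xs‖) : ℝ) : EReal)
      ≤ smoothedGap f A b βx βy xs y x ys :=
  outer_saddle_smoothedGap_ge_neg_sqrt_general f A b hf_proper hf_conv βx βy hβx xs ys hsaddle x y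
    hfx g hg
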